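/- arXiv:1503.00285 — 2 statements merged into one kernel-verified Lean document; each statement's English description precedes it below -/
import Mathlib

section
/- Let K be a field, A a finite dimensional K-algebra, M a support τ-tilting A-module, and F = Hom_A(M,−). If f: X → Y is a morphism with X, Y ∈ Fac M such that Ff: Hom_A(M,X) → Hom_A(M,Y) is surjective, then f is surjective. -/
open Function

/-- The category `mod R` of finite dimensional (= finitely generated) modules over a
finite dimensional algebra, modeled as bundled finitely generated `R`-modules. -/
structure FdModule (R : Type) [Ring R] : Type 1 where
  carrier : Type
  [isAddCommGroup : AddCommGroup carrier]
  [isModule : Module R carrier]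
  [isFinite : Module.Finite R carrier]

attribute [instance] FdModule.isAddCommGroup FdModule.isModule FdModule.isFinite

instance {R : Type} [Ring R] : CoeSort (FdModule R) Type := ⟨FdModule.carrier⟩

section Defs

variable {R : Type} [Ring R]

/-- A torsion class: a class of modules closed under factor modules and extensions. -/
def IsTorsionClass (T : Set (FdModule R)) : Prop :=
  T.Nonempty ∧
  (∀ X ∈ T, ∀ (Y : FdModule R) (f : X →ₗ[R] Y), Surjective f → Y ∈ T) ∧
  (∀ (X Y Z : FdModule R), X ∈ T → Z ∈ T →
    ∀ (f : X →ₗ[R] Y) (g : Y →ₗ[R] Z),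
      Injective f → Surjective g → Exact f g → Y ∈ T)

/-- A torsion-free class: a class of modules closed under submodules and extensions. -/
def IsTorsionFreeClass (F : Set (FdModule R)) : Prop :=
  F.Nonempty ∧
  (∀ Y ∈ F, ∀ (X : FdModule R) (f : X →ₗ[R] Y), Injective f → X ∈ F) ∧
  (∀ (X Y Z : FdModule R), X ∈ F → Z ∈ F →
    ∀ (f : X →ₗ[R] Y) (g : Y →ₗ[R] Z),
      Injective f → Surjective g → Exact f g → Y ∈ F)

/-- A class of modules is contravariantly finite if every module admits a right approximation. -/
def ContravariantlyFinite (X : Set (FdModule R)) : Prop :=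
  ∀ M : FdModule R, ∃ X₀ ∈ X, ∃ f : X₀ →ₗ[R] M,
    ∀ X' ∈ X, ∀ g : X' →ₗ[R] M, ∃ h : X' →ₗ[R] X₀, f ∘ₗ h = g

/-- A class of modules is covariantly finite if every module admits a left approximation. -/
def CovariantlyFinite (X : Set (FdModule R)) : Prop :=
  ∀ M : FdModule R, ∃ X₀ ∈ X, ∃ f : M →ₗ[R] X₀,
    ∀ X' ∈ X, ∀ g : M →ₗ[R] X', ∃ h : X₀ →ₗ[R] X', h ∘ₗ f = g

def FunctoriallyFinite (X : Set (FdModule R)) : Prop :=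
  ContravariantlyFinite X ∧ CovariantlyFinite X

/-- An indecomposable module: nonzero, and any direct sum decomposition is trivial. -/
def IsIndec (M : FdModule R) : Prop :=
  Nontrivial M ∧ ∀ N L : Submodule R M, IsCompl N L → N = ⊥ ∨ L = ⊥

/-- `Fac M`: the modules generated by `M`, i.e. quotients of finite direct sums of copies of `M`. -/
def Fac (M : FdModule R) : Set (FdModule R) :=
  {X | ∃ (n : ℕ) (f : (Fin n → M) →ₗ[R] X), Surjective f}

/-- `Sub M`: the modules cogenerated by `M`. -/
def Subm (M : FdModule R) : Set (FdModule R) :=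
  {X | ∃ (n : ℕ) (f : X →ₗ[R] (Fin n → M)), Injective f}

/-- A minimal projective presentation `P₁ → P₀ → M → 0`. -/
structure MinProjPres (M : FdModule R) : Type 1 where
  P₁ : FdModule R
  P₀ : FdModule R
  projP₁ : Module.Projective R P₁
  projP₀ : Module.Projective R P₀
  d : P₁ →ₗ[R] P₀
  π : P₀ →ₗ[R] M
  surj : Surjective π
  exact : Exact d π
  /-- `π : P₀ → M` is a projective cover: its kernel is superfluous in `P₀`. -/
  sup₀ : ∀ N : Submodule R P₀, N ⊔ LinearMap.ker π = ⊤ → N = ⊤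
  /-- `P₁ → ker π` is a projective cover: the kernel of `d` is superfluous in `P₁`. -/
  sup₁ : ∀ N : Submodule R P₁, N ⊔ LinearMap.ker d = ⊤ → N = ⊤

/-- `|M| = n`: `M` has exactly `n` pairwise non-isomorphic indecomposable direct summands. -/
def NumIndecSummands (M : FdModule R) (n : ℕ) : Prop :=
  ∃ (D : Fin n → FdModule R) (m : Fin n → ℕ),
    (∀ i, IsIndec (D i)) ∧ (∀ i, 0 < m i) ∧
    (∀ i j, Nonempty ((D i : Type) ≃ₗ[R] (D j : Type)) → i = j) ∧
    Nonempty ((M : Type) ≃ₗ[R] ((p : (i : Fin n) × Fin (m i)) → D p.1))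

end Defs

section Tau

variable (K A : Type) [Field K] [Ring A] [Algebra K A] [FiniteDimensional K A]

instance : Module.Finite Aᵐᵒᵖ A := by
  refine ⟨⟨{1}, ?_⟩⟩
  rw [eq_top_iff]
  intro x _
  have : x ∈ Submodule.span Aᵐᵒᵖ ({1} : Set A) := by
    rw [Submodule.mem_span_singleton]
    exact ⟨MulOpposite.op x, by simp [MulOpposite.smul_eq_mul_unop]⟩
  simpa using this

/-- The regular right `A`-module `A_A`. -/
def regMod : FdModule Aᵐᵒᵖ := { carrier := A }

variable {A}

/-- Left multiplication by `a` on `Hom_A(P, A)`, the left `A`-module structure on the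
`A`-dual of a right `A`-module, given pointwise: `(a • f) x = a * f x`. -/
def lsmulHom {P : FdModule Aᵐᵒᵖ} (a : A) (f : P →ₗ[Aᵐᵒᵖ] A) : P →ₗ[Aᵐᵒᵖ] A where
  toFun x := a * f x
  map_add' x y := by simp [mul_add]
  map_smul' b x := by
    simp only [map_smul, MulOpposite.smul_eq_mul_unop, RingHom.id_apply, mul_assoc]

variable (A)

/-- `T` is the Auslander-Reiten translate `τM = D (coker Hom_A(d, A))` computed from the
minimal projective presentation `pres` of `M`: this is expressed by the existence of a
perfect `K`-bilinear pairing `β` between `T` and `coker (Hom_A(d,A))`, compatible with the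
`A`-module structures.  Functionals on the cokernel of
`Hom_A(d,A) : Hom_A(P₀,A) → Hom_A(P₁,A)` are identified with functionals on `Hom_A(P₁,A)`
vanishing on the image of `Hom_A(d,A)`. -/
def IsTauDual (M : FdModule Aᵐᵒᵖ) (pres : MinProjPres M) (T : FdModule Aᵐᵒᵖ) : Prop :=
  ∃ β : T → (pres.P₁ →ₗ[Aᵐᵒᵖ] A) → K,
    (∀ t t' f, β (t + t') f = β t f + β t' f) ∧
    (∀ t f f', β t (f + f') = β t f + β t f') ∧
    (∀ (k : K) t f, β (MulOpposite.op (algebraMap K A k) • t) f = k * β t f) ∧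
    (∀ (k : K) t f, β t (lsmulHom (algebraMap K A k) f) = k * β t f) ∧
    -- compatibility of the right `A`-action on `T` with the left `A`-action on the cokernel
    (∀ (a : A) t f, β (MulOpposite.op a • t) f = β t (lsmulHom a f)) ∧
    -- `β t` vanishes on the image of `Hom_A(d, A)`
    (∀ t (g : pres.P₀ →ₗ[Aᵐᵒᵖ] A), β t (g ∘ₗ pres.d) = 0) ∧
    -- the pairing is non-degenerate in `t`
    (∀ t, (∀ f, β t f = 0) → t = 0) ∧
    -- every `K`-linear functional vanishing on the image of `Hom_A(d,A)` arises from some `t`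
    (∀ φ : (pres.P₁ →ₗ[Aᵐᵒᵖ] A) → K,
      (∀ f f', φ (f + f') = φ f + φ f') →
      (∀ (k : K) f, φ (lsmulHom (algebraMap K A k) f) = k * φ f) →
      (∀ g : pres.P₀ →ₗ[Aᵐᵒᵖ] A, φ (g ∘ₗ pres.d) = 0) →
      ∃ t, ∀ f, φ f = β t f)

/-- `M` is τ-rigid: `Hom_A(M, τM) = 0`. -/
def IsTauRigid (M : FdModule Aᵐᵒᵖ) : Prop :=
  ∀ (pres : MinProjPres M) (T : FdModule Aᵐᵒᵖ), IsTauDual K A M pres T →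
    ∀ f : M →ₗ[Aᵐᵒᵖ] T, f = 0

/-- `(M, P)` is a support τ-tilting pair, so `M` is a support τ-tilting module. -/
def IsSupportTauTilting (M : FdModule Aᵐᵒᵖ) : Prop :=
  ∃ P : FdModule Aᵐᵒᵖ, Module.Projective Aᵐᵒᵖ P ∧
    IsTauRigid K A M ∧ (∀ f : P →ₗ[Aᵐᵒᵖ] M, f = 0) ∧
    ∃ nM nP nA : ℕ, NumIndecSummands M nM ∧ NumIndecSummands P nP ∧
      NumIndecSummands (regMod A) nA ∧ nM + nP = nA

end Tau

theorem LinearMap.surjective_of_surjective_comp_of_pi_surjective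
    {R M X Y ι : Type*} [Semiring R] [AddCommMonoid M] [AddCommMonoid X] [AddCommMonoid Y]
    [Module R M] [Module R X] [Module R Y] [Finite ι]
    (π : (ι → M) →ₗ[R] Y) (hπ : Surjective π) (f : X →ₗ[R] Y)
    (hf : Surjective fun g : M →ₗ[R] X => f ∘ₗ g) :
    Surjective f := by
  classical
  -- `Y` is the sum of the images of the maps `π ∘ single i : M → Y`, each of which lifts through `f`.
  rw [← LinearMap.range_eq_top, eq_top_iff, ← LinearMap.range_eq_top.mpr hπ,
    LinearMap.range_eq_map, ← LinearMap.iSup_range_single, Submodule.map_iSup]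
  refine iSup_le fun i => ?_
  obtain ⟨g, hg⟩ := hf (π ∘ₗ LinearMap.single R (fun _ => M) i)
  rw [← LinearMap.range_comp, ← hg]
  exact LinearMap.range_comp_le_range g f

theorem surjective_of_hom_surjective_general
    (A : Type) [Ring A]
    (M : FdModule Aᵐᵒᵖ)
    (X Y : FdModule Aᵐᵒᵖ) (hY : Y ∈ Fac M)
    (f : X →ₗ[Aᵐᵒᵖ] Y)
    (hFf : Surjective (fun g : (M : Type) →ₗ[Aᵐᵒᵖ] (X : Type) => f ∘ₗ g)) :
    Surjective f := by
  obtain ⟨n, π, hπ⟩ := hY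
  exact LinearMap.surjective_of_surjective_comp_of_pi_surjective π hπ f hFf

/-- Let `M` be a support τ-tilting `A`-module and `F = Hom_A(M, -)`.  If `f : X → Y` is a
morphism with `X, Y ∈ Fac M` such that `Ff : Hom_A(M,X) → Hom_A(M,Y)`, `g ↦ f ∘ g`, is
surjective, then `f` is surjective. -/
theorem surjective_of_hom_surjective
    (K A : Type) [Field K] [Ring A] [Algebra K A] [FiniteDimensional K A]
    (M : FdModule Aᵐᵒᵖ) (hM : IsSupportTauTilting K A M)
    (X Y : FdModule Aᵐᵒᵖ) (hX : X ∈ Fac M) (hY : Y ∈ Fac M)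
    (f : X →ₗ[Aᵐᵒᵖ] Y)
    (hFf : Surjective (fun g : (M : Type) →ₗ[Aᵐᵒᵖ] (X : Type) => f ∘ₗ g)) :
    Surjective f :=
  surjective_of_hom_surjective_general A M X Y hY f hFf
end

section
/- Let T be a K-linear, Hom-finite, Krull–Schmidt triangulated category with a basic silting object S. Let M ∈ (add S) * (add ΣS) be an object with Hom_T(M, ΣM) = 0, and let S' --f--> S'' → M → ΣS' be a triangle in T with S', S'' ∈ add S and f a radical morphism. Then S' and S'' have no non-zero common direct summand. -/
open CategoryTheory Limits Pretriangulated Function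

universe u

noncomputable section

variable {C : Type} [Category C] [Preadditive C] [HasZeroObject C]
  [HasShift C ℤ] [∀ n : ℤ, (CategoryTheory.shiftFunctor C n).Additive] [Pretriangulated C]
  [HasFiniteBiproducts C]

/-- An object of a triangulated category is presilting if `Hom(S, S[k]) = 0` for all `k > 0`. -/
def IsPresilting (S : C) : Prop :=
  ∀ k : ℤ, 0 < k → ∀ f : S ⟶ S⟦k⟧, f = 0

/-- `Hom(X, Y[k]) = 0` for all `k > 0`; for silting objects this is the partial
order `X ≥ Y`. -/
def SiltGE (X Y : C) : Prop :=
  ∀ k : ℤ, 0 < k → ∀ f : X ⟶ Y⟦k⟧, f = 0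

/-- A thick subcategory: closed under isomorphisms, shifts, cones and direct summands. -/
def IsThick (S : Set C) : Prop :=
  (∀ X Y : C, (X ≅ Y) → X ∈ S → Y ∈ S) ∧
  (∀ X ∈ S, ∀ k : ℤ, X⟦k⟧ ∈ S) ∧
  (∀ T ∈ distTriang C, T.obj₁ ∈ S → T.obj₂ ∈ S → T.obj₃ ∈ S) ∧
  (∀ X Y : C, (X ⊞ Y) ∈ S → X ∈ S)

/-- A silting object: presilting, and the smallest thick subcategory containing it is the
whole category. -/
def IsSilting (S : C) : Prop :=
  IsPresilting S ∧ ∀ 𝒮 : Set C, IsThick 𝒮 → S ∈ 𝒮 → ∀ Y : C, Y ∈ 𝒮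

/-- An indecomposable object: nonzero, with no nontrivial direct sum decomposition. -/
def IsIndecObj (X : C) : Prop :=
  ¬ IsZero X ∧ ∀ Y Z : C, Nonempty (X ≅ Y ⊞ Z) → IsZero Y ∨ IsZero Z

/-- A family of objects is basic if its members are indecomposable and pairwise
non-isomorphic. -/
def IsBasicFamily {n : ℕ} (D : Fin n → C) : Prop :=
  (∀ i, IsIndecObj (D i)) ∧ ∀ i j : Fin n, Nonempty (D i ≅ D j) → i = j

/-- `add X`: direct summands of finite direct sums of copies of `X`. -/
def addOf (X : C) : Set C :=
  {Y | ∃ (n : ℕ) (Z : C), Nonempty ((Y ⊞ Z) ≅ ⨁ (fun _ : Fin n => X))}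

/-- `𝒳 * 𝒴`: objects `Z` fitting in a triangle `X → Z → Y → X[1]` with `X ∈ 𝒳`, `Y ∈ 𝒴`. -/
def starOf (𝒳 𝒴 : Set C) : Set C :=
  {Z | ∃ T ∈ distTriang C, T.obj₂ = Z ∧ T.obj₁ ∈ 𝒳 ∧ T.obj₃ ∈ 𝒴}

/-- `add 𝒮` for a class of objects `𝒮`: direct summands of finite direct sums of objects
of `𝒮`. -/
def addOfSet (𝒮 : Set C) : Set C :=
  {Y | ∃ (n : ℕ) (D : Fin n → C) (Z : C), (∀ i, D i ∈ 𝒮) ∧ Nonempty ((Y ⊞ Z) ≅ ⨁ D)}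

/-- The category is Hom-finite over `K`. -/
def HomFinite (K : Type) [Field K] [Linear K C] : Prop :=
  ∀ X Y : C, FiniteDimensional K (X ⟶ Y)

/-- The category is Krull-Schmidt: every object is a finite direct sum of objects with local
endomorphism rings. -/
def IsKrullSchmidt : Prop :=
  ∀ X : C, ∃ (n : ℕ) (D : Fin n → C),
    (∀ i, IsLocalRing (End (D i))) ∧ Nonempty (X ≅ ⨁ D)

/-- The Grothendieck group `K₀` of a triangulated category: the free abelian group on the
objects modulo the relations `[X] - [Y] + [Z] = 0` for each distinguished triangle
`X → Y → Z → X[1]`. -/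
def K0Sub (C : Type) [Category C] [Preadditive C] [HasZeroObject C]
    [HasShift C ℤ] [∀ n : ℤ, (CategoryTheory.shiftFunctor C n).Additive]
    [Pretriangulated C] : AddSubgroup (FreeAbelianGroup C) :=
  AddSubgroup.closure
    {x | ∃ T ∈ distTriang C,
      x = FreeAbelianGroup.of T.obj₁ - FreeAbelianGroup.of T.obj₂ + FreeAbelianGroup.of T.obj₃}

def K0 (C : Type) [Category C] [Preadditive C] [HasZeroObject C]
    [HasShift C ℤ] [∀ n : ℤ, (CategoryTheory.shiftFunctor C n).Additive]
    [Pretriangulated C] : Type :=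
  FreeAbelianGroup C ⧸ K0Sub C

instance : AddCommGroup (K0 C) := QuotientAddGroup.Quotient.addCommGroup _

/-- The class `[X] ∈ K₀(C)` of an object. -/
def K0.cls (X : C) : K0 C := QuotientAddGroup.mk (FreeAbelianGroup.of X)

/-- `G` is the matrix whose `j`-th column is the `g`-vector of `M j` with respect to the
basic silting object with indecomposable summands `S 1, …, S n`, i.e. the coordinate vector
of `[M j]` in the basis `[S 1], …, [S n]` of `K₀(C)`. -/
def GMatrix {n m : ℕ} (S : Fin n → C) (M : Fin m → C) (G : Matrix (Fin n) (Fin m) ℤ) : Prop :=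
  ∀ j, K0.cls (M j) = ∑ i, G i j • K0.cls (S i)

end

section Radical

variable {C : Type} [Category C] [Preadditive C] [HasZeroObject C]
  [HasShift C ℤ] [∀ n : ℤ, (CategoryTheory.shiftFunctor C n).Additive] [Pretriangulated C]
  [HasFiniteBiproducts C]

/-- A morphism `f : S' → S''` is a radical morphism: there are no direct sum decompositions
`S' ≅ U ⊞ U'` and `S'' ≅ V ⊞ V'` with `U ≠ 0` such that the component `U → V` of `f` is an
isomorphism. -/
def IsRadicalMorphism {S' S'' : C} (f : S' ⟶ S'') : Prop :=
  ¬ ∃ (U U' V V' : C) (e : S' ≅ U ⊞ U') (e' : S'' ≅ V ⊞ V'),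
      ¬ IsZero U ∧ IsIso (biprod.inl ≫ e.inv ≫ f ≫ e'.hom ≫ biprod.fst : U ⟶ V)

/-- `U` is a direct summand of `X`. -/
def IsSummand (U X : C) : Prop :=
  ∃ (i : U ⟶ X) (r : X ⟶ U), i ≫ r = 𝟙 U

end Radical

/-!
If `U ≠ 0` were a common summand, Krull–Schmidt lets us take `U` with local endomorphism ring.
Rigidity of `M` together with `Hom(S'', ΣS') = 0` forces every morphism `S' ⟶ S''` to be of the
form `χ ≫ f + f ≫ θ`; applied to `S' ↠ U ↪ S''` this writes `𝟙 U` as a sum of two morphisms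
factoring through `f`. One of them is invertible since `End U` is local, so `U` splits off `S'`
and `S''` compatibly with `f`, and `f` is not radical.
-/

section Preadditive

variable {D : Type*} [Category D] [Preadditive D]

lemma CategoryTheory.Retract.hom_eq_zero {X A Y B : D} (hX : Retract X A) (hY : Retract Y B)
    (h : ∀ v : A ⟶ B, v = 0) (u : X ⟶ Y) : u = 0 :=
  calc u = hX.i ≫ (hX.r ≫ u ≫ hY.i) ≫ hY.r := by simp
    _ = 0 := by rw [h (hX.r ≫ u ≫ hY.i)]; simp

lemma CategoryTheory.Limits.biproduct.hom_eq_zero {ι κ : Type*} {X : ι → D} {Y : κ → D}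
    [HasBiproduct X] [HasBiproduct Y] (h : ∀ i k (v : X i ⟶ Y k), v = 0) (v : ⨁ X ⟶ ⨁ Y) : v = 0 :=
  biproduct.hom_ext' _ _ fun i => biproduct.hom_ext _ _ fun k => by
    simpa using h i k (biproduct.ι X i ≫ v ≫ biproduct.π Y k)

lemma not_isZero_of_nontrivial_end {U : D} [Nontrivial (End U)] : ¬ IsZero U := fun hU =>
  one_ne_zero (α := End U) ((IsZero.iff_id_eq_zero U).mp hU)

lemma isIso_or_isIso_of_add_eq_id {U : D} [IsLocalRing (End U)] {x y : U ⟶ U}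
    (h : x + y = 𝟙 U) : IsIso x ∨ IsIso y := by
  simpa only [isUnit_iff_isIso] using IsLocalRing.isUnit_or_isUnit_of_add_one (R := End U) h

lemma IsKrullSchmidt.exists_isLocalRing_retract {C : Type} [Category C] [Preadditive C]
    [HasFiniteBiproducts C] (hKS : IsKrullSchmidt (C := C)) {X : C}
    (hX : ¬ IsZero X) : ∃ U : C, IsLocalRing (End U) ∧ Nonempty (Retract U X) := by
  obtain ⟨m, P, hloc, ⟨e⟩⟩ := hKS X
  obtain ⟨j⟩ : Nonempty (Fin m) := by
    by_contra hm
    refine hX (IsZero.of_iso ?_ e)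
    rw [IsZero.iff_id_eq_zero]
    exact biproduct.hom_ext' _ _ fun j => (hm ⟨j⟩).elim
  exact ⟨P j, hloc j, ⟨(Retract.mk (biproduct.ι P j) (biproduct.π P j)).trans (.ofIso e.symm)⟩⟩

end Preadditive

section Pretriangulated

variable {C : Type} [Category C] [Preadditive C] [HasZeroObject C]
  [HasShift C ℤ] [∀ n : ℤ, (CategoryTheory.shiftFunctor C n).Additive] [Pretriangulated C]

lemma exists_iso_biprod_of_isSplitMono {U X : C} (a : U ⟶ X) [IsSplitMono a] :
    ∃ (N : C) (e : X ≅ U ⊞ N), a ≫ e.hom = biprod.inl := by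
  obtain ⟨N, q, δ, hT⟩ := distinguished_cocone_triangle a
  obtain ⟨e, he, -⟩ := exists_iso_binaryBiproduct_of_distTriang _ hT
    (Triangle.mor₃_eq_zero_of_mono₁ _ hT (inferInstanceAs (Mono a)))
  exact ⟨N, e, he⟩

lemma IsRadicalMorphism.not_isIso_comp {S' S'' U : C} {f : S' ⟶ S''} (hf : IsRadicalMorphism f)
    (hU : ¬ IsZero U) (a : U ⟶ S') (b : S'' ⟶ U) : ¬ IsIso (a ≫ f ≫ b) := by
  rintro ⟨c, hc, -⟩
  have : IsSplitMono a := ⟨⟨f ≫ b ≫ c, by simpa using hc⟩⟩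
  have : IsSplitMono (a ≫ f) := ⟨⟨b ≫ c, by simpa using hc⟩⟩
  obtain ⟨N, e, he⟩ := exists_iso_biprod_of_isSplitMono a
  obtain ⟨N', e', he'⟩ := exists_iso_biprod_of_isSplitMono (a ≫ f)
  have hinl : biprod.inl ≫ e.inv = a := by simp [← he]
  refine hf ⟨U, N, U, N', e, e', hU, ?_⟩
  rw [reassoc_of% hinl, reassoc_of% he', biprod.inl_fst]
  infer_instance

lemma exists_eq_comp_add_comp_of_distTriang {S' S'' M : C} {f : S' ⟶ S''} {g : S'' ⟶ M}
    {h : M ⟶ S'⟦(1 : ℤ)⟧} (htri : Triangle.mk f g h ∈ distTriang C)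
    (hM : ∀ u : M ⟶ M⟦(1 : ℤ)⟧, u = 0) (hS : ∀ u : S'' ⟶ S'⟦(1 : ℤ)⟧, u = 0) (φ : S' ⟶ S'') :
    ∃ (χ : S' ⟶ S') (θ : S'' ⟶ S''), φ = χ ≫ f + f ≫ θ := by
  have hrot := rot_of_distTriang _ htri
  have hφg : (h ≫ φ⟦(1 : ℤ)⟧') ≫ g⟦(1 : ℤ)⟧' = 0 := by
    simpa using hM (h ≫ (φ ≫ g)⟦(1 : ℤ)⟧')
  obtain ⟨ψ, hψ⟩ : ∃ ψ : M ⟶ S'⟦(1 : ℤ)⟧, h ≫ φ⟦(1 : ℤ)⟧' = ψ ≫ (-f⟦(1 : ℤ)⟧') :=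
    Triangle.coyoneda_exact₁ _ hrot _ hφg
  obtain ⟨χ, rfl⟩ : ∃ χ : S' ⟶ S', ψ = h ≫ χ⟦(1 : ℤ)⟧' := by
    obtain ⟨χ', hχ'⟩ := Triangle.yoneda_exact₂ _ hrot ψ (hS _)
    obtain ⟨χ, rfl⟩ := (shiftFunctor C (1 : ℤ)).map_surjective χ'
    exact ⟨χ, hχ'⟩
  obtain ⟨θ, hθ⟩ : ∃ θ : S'' ⟶ S'',
      (φ + χ ≫ f)⟦(1 : ℤ)⟧' = (-f⟦(1 : ℤ)⟧') ≫ θ⟦(1 : ℤ)⟧' := by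
    have hφχ : h ≫ (φ + χ ≫ f)⟦(1 : ℤ)⟧' = 0 := by simp [hψ]
    obtain ⟨ε, hε⟩ := Triangle.yoneda_exact₃ _ hrot _ hφχ
    obtain ⟨θ, rfl⟩ := (shiftFunctor C (1 : ℤ)).map_surjective ε
    exact ⟨θ, hε⟩
  refine ⟨-χ, -θ, (shiftFunctor C (1 : ℤ)).map_injective ?_⟩
  simp only [Functor.map_add, Functor.map_comp, Functor.map_neg, Preadditive.neg_comp,
    Preadditive.comp_neg] at hθ ⊢
  rw [← hθ]
  abel

variable [HasFiniteBiproducts C]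

lemma exists_retract_of_mem_addOf {S₀ X : C} (hX : X ∈ addOf S₀) :
    ∃ n : ℕ, Nonempty (Retract X (⨁ fun _ : Fin n => S₀)) := by
  obtain ⟨n, Z, ⟨e⟩⟩ := hX
  exact ⟨n, ⟨(Retract.mk biprod.inl biprod.fst).trans (.ofIso e)⟩⟩

lemma IsPresilting.hom_shift_eq_zero {S₀ X Y : C} (hS₀ : IsPresilting S₀) (hX : X ∈ addOf S₀)
    (hY : Y ∈ addOf S₀) {k : ℤ} (hk : 0 < k) (u : X ⟶ Y⟦k⟧) : u = 0 := by
  obtain ⟨m, ⟨rX⟩⟩ := exists_retract_of_mem_addOf hX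
  obtain ⟨n, ⟨rY⟩⟩ := exists_retract_of_mem_addOf hY
  have rYk : Retract (Y⟦k⟧) (⨁ fun _ : Fin n => S₀⟦k⟧) :=
    (rY.map (shiftFunctor C k)).trans (.ofIso ((shiftFunctor C k).mapBiproduct _))
  exact rX.hom_eq_zero rYk (biproduct.hom_eq_zero fun _ _ => hS₀ k hk) u

end Pretriangulated

/-- Let `S` be a basic silting object of a `K`-linear, Hom-finite, Krull-Schmidt
triangulated category, `M ∈ (add S) * (add ΣS)` with `Hom(M, ΣM) = 0`, and let
`S' → S'' → M → ΣS'` be a triangle with `S', S'' ∈ add S` and `f : S' → S''` a radical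
morphism.  Then `S'` and `S''` have no nonzero common direct summand. -/
theorem no_common_summand_of_radical_presentation
    (K : Type) [Field K]
    {C : Type} [Category C] [Preadditive C] [HasZeroObject C]
    [HasShift C ℤ] [∀ n : ℤ, (CategoryTheory.shiftFunctor C n).Additive] [Pretriangulated C]
    [HasFiniteBiproducts C] [CategoryTheory.Linear K C]
    (hfin : HomFinite (C := C) K) (hKS : IsKrullSchmidt (C := C))
    {n : ℕ} (Sfam : Fin n → C) (hSb : IsBasicFamily Sfam) (hS : IsSilting (⨁ Sfam))
    (M : C)
    (hM : M ∈ starOf (addOf (⨁ Sfam)) (addOf ((⨁ Sfam)⟦(1 : ℤ)⟧)))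
    (hrigid : ∀ f : M ⟶ M⟦(1 : ℤ)⟧, f = 0)
    (S' S'' : C) (f : S' ⟶ S'') (g : S'' ⟶ M) (h : M ⟶ S'⟦(1 : ℤ)⟧)
    (htri : Triangle.mk f g h ∈ distTriang C)
    (hS' : S' ∈ addOf (⨁ Sfam)) (hS'' : S'' ∈ addOf (⨁ Sfam))
    (hrad : IsRadicalMorphism f) :
    ¬ ∃ U : C, ¬ IsZero U ∧ IsSummand U S' ∧ IsSummand U S'' := by
  rintro ⟨U₀, hU₀, ⟨i', r', hr'⟩, ⟨i'', r'', hr''⟩⟩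
  obtain ⟨U, hloc, ⟨ρ⟩⟩ := hKS.exists_isLocalRing_retract hU₀
  let ρ' : Retract U S' := ρ.trans ⟨i', r', hr'⟩
  let ρ'' : Retract U S'' := ρ.trans ⟨i'', r'', hr''⟩
  obtain ⟨χ, θ, hφ⟩ := exists_eq_comp_add_comp_of_distTriang htri hrigid
    (hS.1.hom_shift_eq_zero hS'' hS' one_pos) (ρ'.r ≫ ρ''.i)
  have hid : (ρ'.i ≫ χ) ≫ f ≫ ρ''.r + ρ'.i ≫ f ≫ θ ≫ ρ''.r = 𝟙 U :=
    calc _ = ρ'.i ≫ (χ ≫ f + f ≫ θ) ≫ ρ''.r := by simp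
      _ = 𝟙 U := by rw [← hφ]; simp
  rcases isIso_or_isIso_of_add_eq_id hid with hiso | hiso <;>
    exact hrad.not_isIso_comp not_isZero_of_nontrivial_end _ _ hiso
end
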